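/- arXiv:solv-int/9603010 — 2 statements merged into one kernel-verified Lean document; each statement's English description precedes it below -/
import Mathlib

section
/- Let δ₁, …, δ_m be distinct positive real numbers and a_j, b_j real numbers not all zero. Then the trigonometric polynomial ψ(t) = Σ_{j=1}^m (a_j cos(δ_j t) + b_j sin(δ_j t)) takes strictly positive values on an unbounded set: there exists a sequence t_ν → ∞ with ψ(t_ν) > 0. -/
open Filter intervalIntegral Real

lemma aux_bdd_div (f : ℝ → ℝ) (C : ℝ) (hf : ∀ T, |f T| ≤ C) :
    Tendsto (fun T => f T / T) atTop (nhds 0) := by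
  have hb : ∀ᶠ T in atTop, ‖f T / T‖ ≤ C / T := by
    filter_upwards [eventually_gt_atTop 0] with T hT
    rw [Real.norm_eq_abs, abs_div, abs_of_pos hT]
    gcongr; exact hf T
  exact squeeze_zero_norm' hb (Tendsto.div_atTop tendsto_const_nhds tendsto_id)

lemma aux_int_cos (γ N B : ℝ) (hγ : γ ≠ 0) :
    (∫ t in N..B, Real.cos (γ * t)) = (Real.sin (γ * B) - Real.sin (γ * N)) / γ := by
  rw [intervalIntegral.integral_comp_mul_left (fun x => Real.cos x) hγ, integral_cos]
  rw [smul_eq_mul]; ring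

lemma aux_int_sin (γ N B : ℝ) (hγ : γ ≠ 0) :
    (∫ t in N..B, Real.sin (γ * t)) = (Real.cos (γ * N) - Real.cos (γ * B)) / γ := by
  rw [intervalIntegral.integral_comp_mul_left (fun x => Real.sin x) hγ, integral_sin]
  rw [smul_eq_mul]; ring

lemma aux_mean_cos (γ N : ℝ) :
    Tendsto (fun T => (∫ t in N..(N+T), Real.cos (γ * t)) / T) atTop
      (nhds (if γ = 0 then 1 else 0)) := by
  by_cases hγ : γ = 0
  · simp only [hγ, if_pos, zero_mul, Real.cos_zero]
    have : ∀ᶠ T in (atTop : Filter ℝ), (∫ t in N..(N+T), (1:ℝ)) / T = 1 := by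
      filter_upwards [eventually_gt_atTop 0] with T hT
      simp [div_self hT.ne']
    refine Tendsto.congr' ?_ (tendsto_const_nhds (x := (1:ℝ)))
    filter_upwards [this] with T h using h.symm
  · simp only [hγ, if_neg]
    apply aux_bdd_div _ (2 / |γ|)
    intro T
    rw [aux_int_cos γ N _ hγ, abs_div]
    gcongr
    calc |Real.sin (γ*(N+T)) - Real.sin (γ*N)| ≤ |Real.sin (γ*(N+T))| + |Real.sin (γ*N)| := abs_sub _ _
      _ ≤ 1 + 1 := add_le_add (Real.abs_sin_le_one _) (Real.abs_sin_le_one _)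
      _ = 2 := by norm_num

lemma aux_mean_sin (γ N : ℝ) :
    Tendsto (fun T => (∫ t in N..(N+T), Real.sin (γ * t)) / T) atTop (nhds 0) := by
  by_cases hγ : γ = 0
  · simp [hγ]
  · apply aux_bdd_div _ (2 / |γ|)
    intro T
    rw [aux_int_sin γ N _ hγ, abs_div]
    gcongr
    calc |Real.cos (γ*N) - Real.cos (γ*(N+T))| ≤ |Real.cos (γ*N)| + |Real.cos (γ*(N+T))| := abs_sub _ _
      _ ≤ 1 + 1 := add_le_add (Real.abs_cos_le_one _) (Real.abs_cos_le_one _)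
      _ = 2 := by norm_num

lemma aux_pair (aj bj ak bk x y : ℝ) :
    (aj * Real.cos x + bj * Real.sin x) * (ak * Real.cos y + bk * Real.sin y)
    = (aj*ak + bj*bk)/2 * Real.cos (x - y) + ((aj*ak - bj*bk)/2 * Real.cos (x + y)
      + ((aj*bk + bj*ak)/2 * Real.sin (x + y) + (bj*ak - aj*bk)/2 * Real.sin (x - y))) := by
  rw [Real.cos_sub, Real.cos_add, Real.sin_add, Real.sin_sub]; ring

lemma aux_mean_pair (δj δk aj bj ak bk N : ℝ) :
    Tendsto (fun T => (∫ t in N..(N+T),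
        (aj * Real.cos (δj*t) + bj * Real.sin (δj*t)) * (ak * Real.cos (δk*t) + bk * Real.sin (δk*t))) / T)
      atTop (nhds ((aj*ak + bj*bk)/2 * (if δj - δk = 0 then 1 else 0)
        + ((aj*ak - bj*bk)/2 * (if δj + δk = 0 then 1 else 0)
        + ((aj*bk + bj*ak)/2 * 0 + (bj*ak - aj*bk)/2 * 0)))) := by
  have hid : ∀ t : ℝ, (aj * Real.cos (δj*t) + bj * Real.sin (δj*t)) * (ak * Real.cos (δk*t) + bk * Real.sin (δk*t))
      = (aj*ak + bj*bk)/2 * Real.cos ((δj-δk)*t) + ((aj*ak - bj*bk)/2 * Real.cos ((δj+δk)*t)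
      + ((aj*bk + bj*ak)/2 * Real.sin ((δj+δk)*t) + (bj*ak - aj*bk)/2 * Real.sin ((δj-δk)*t))) := by
    intro t; rw [show (δj-δk)*t = δj*t - δk*t by ring, show (δj+δk)*t = δj*t + δk*t by ring]; exact aux_pair ..
  have hic : ∀ (c γ B : ℝ), IntervalIntegrable (fun t => c * Real.cos (γ*t)) MeasureTheory.volume N B :=
    fun c γ B => (Continuous.intervalIntegrable (by fun_prop) _ _)
  have his : ∀ (c γ B : ℝ), IntervalIntegrable (fun t => c * Real.sin (γ*t)) MeasureTheory.volume N B :=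
    fun c γ B => (Continuous.intervalIntegrable (by fun_prop) _ _)
  have key : ∀ B : ℝ, (∫ t in N..B,
        (aj * Real.cos (δj*t) + bj * Real.sin (δj*t)) * (ak * Real.cos (δk*t) + bk * Real.sin (δk*t)))
      = (aj*ak + bj*bk)/2 * (∫ t in N..B, Real.cos ((δj-δk)*t))
        + ((aj*ak - bj*bk)/2 * (∫ t in N..B, Real.cos ((δj+δk)*t))
        + ((aj*bk + bj*ak)/2 * (∫ t in N..B, Real.sin ((δj+δk)*t))
          + (bj*ak - aj*bk)/2 * (∫ t in N..B, Real.sin ((δj-δk)*t)))) := by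
    intro B
    simp only [hid]
    rw [intervalIntegral.integral_add (hic _ _ _) (((hic _ _ _).add ((his _ _ _).add (his _ _ _)))),
      intervalIntegral.integral_add (hic _ _ _) ((his _ _ _).add (his _ _ _)),
      intervalIntegral.integral_add (his _ _ _) (his _ _ _),
      intervalIntegral.integral_const_mul, intervalIntegral.integral_const_mul,
      intervalIntegral.integral_const_mul, intervalIntegral.integral_const_mul]
  simp only [key, add_div, mul_div_assoc]
  exact ((aux_mean_cos _ N).const_mul _).add (((aux_mean_cos _ N).const_mul _).add
    (((aux_mean_sin _ N).const_mul _).add ((aux_mean_sin _ N).const_mul _)))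

lemma aux_mean_term (α β γ N : ℝ) (hγ : γ ≠ 0) :
    Tendsto (fun T => (∫ t in N..(N+T), (α * Real.cos (γ*t) + β * Real.sin (γ*t))) / T)
      atTop (nhds 0) := by
  have key : ∀ B : ℝ, (∫ t in N..B, (α * Real.cos (γ*t) + β * Real.sin (γ*t)))
      = α * (∫ t in N..B, Real.cos (γ*t)) + β * (∫ t in N..B, Real.sin (γ*t)) := by
    intro B
    rw [intervalIntegral.integral_add (Continuous.intervalIntegrable (by fun_prop) _ _)
      (Continuous.intervalIntegrable (by fun_prop) _ _),
      intervalIntegral.integral_const_mul, intervalIntegral.integral_const_mul]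
  simp only [key, add_div, mul_div_assoc]
  have := ((aux_mean_cos γ N).const_mul α).add ((aux_mean_sin γ N).const_mul β)
  simpa [hγ] using this
/-- A nonzero trigonometric polynomial with distinct positive frequencies and no constant
term takes strictly positive values on an unbounded set: there is a sequence `t ν → ∞`
along which `ψ (t ν) > 0`. -/
theorem stmt_9 (m : ℕ) (δ : Fin m → ℝ) (hδpos : ∀ j, 0 < δ j)
    (hδinj : Function.Injective δ)
    (a b : Fin m → ℝ) (hne : ¬ (∀ j, a j = 0 ∧ b j = 0))
    (ψ : ℝ → ℝ)
    (hψ : ∀ t : ℝ, ψ t = ∑ j, (a j * Real.cos (δ j * t) + b j * Real.sin (δ j * t))) :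
    ∃ t : ℕ → ℝ, Tendsto t atTop atTop ∧ ∀ ν, 0 < ψ (t ν) := by
  have hco : Continuous ψ := by
    have h : ψ = fun t => ∑ j, (a j * Real.cos (δ j * t) + b j * Real.sin (δ j * t)) :=
      funext hψ
    rw [h]; fun_prop
  set M := ∑ j, (|a j| + |b j|) with hMdef
  have hM : ∀ t, |ψ t| ≤ M := by
    intro t
    rw [hψ t]
    refine (Finset.abs_sum_le_sum_abs _ _).trans (Finset.sum_le_sum fun j _ => ?_)
    calc |a j * Real.cos (δ j * t) + b j * Real.sin (δ j * t)|
        ≤ |a j * Real.cos (δ j * t)| + |b j * Real.sin (δ j * t)| := abs_add_le _ _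
      _ ≤ |a j| * 1 + |b j| * 1 := by
          rw [abs_mul, abs_mul]
          exact add_le_add (mul_le_mul_of_nonneg_left (Real.abs_cos_le_one _) (abs_nonneg _))
            (mul_le_mul_of_nonneg_left (Real.abs_sin_le_one _) (abs_nonneg _))
      _ = |a j| + |b j| := by ring
  -- the constant c > 0
  set c := ∑ j, (a j ^ 2 + b j ^ 2) / 2 with hcdef
  have hc : 0 < c := by
    obtain ⟨j₀, hj₀⟩ := not_forall.1 hne
    have h2 : 0 < a j₀ ^ 2 + b j₀ ^ 2 := by
      rcases not_and_or.1 hj₀ with h | h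
      · have := (sq_nonneg (a j₀)).lt_of_ne (Ne.symm (pow_ne_zero 2 h))
        nlinarith [sq_nonneg (b j₀)]
      · have := (sq_nonneg (b j₀)).lt_of_ne (Ne.symm (pow_ne_zero 2 h))
        nlinarith [sq_nonneg (a j₀)]
    exact Finset.sum_pos' (fun j _ => by positivity) ⟨j₀, Finset.mem_univ j₀, by linarith⟩
  -- main claim: ψ is positive beyond every bound
  have key : ∀ N : ℝ, ∃ t, N < t ∧ 0 < ψ t := by
    intro N
    by_contra hcon
    push_neg at hcon
    set N' := N + 1 with hN'
    have hneg : ∀ t, N' ≤ t → ψ t ≤ 0 := fun t ht => hcon t (by linarith)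
    -- mean of ψ tends to 0
    have hmean : Tendsto (fun T => (∫ t in N'..(N'+T), ψ t) / T) atTop (nhds 0) := by
      have key2 : ∀ B : ℝ, (∫ t in N'..B, ψ t)
          = ∑ j, ∫ t in N'..B, (a j * Real.cos (δ j * t) + b j * Real.sin (δ j * t)) := by
        intro B
        rw [intervalIntegral.integral_congr (g := fun t =>
          ∑ j, (a j * Real.cos (δ j * t) + b j * Real.sin (δ j * t))) (fun t _ => hψ t)]
        exact intervalIntegral.integral_finset_sum
          (fun j _ => Continuous.intervalIntegrable (by fun_prop) _ _)
      simp only [key2, Finset.sum_div]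
      have H := tendsto_finset_sum Finset.univ
        (fun (j : Fin m) (_ : j ∈ Finset.univ) => aux_mean_term (a j) (b j) (δ j) N' (hδpos j).ne')
      simpa using H
    -- mean of ψ² tends to c
    have hmean2 : Tendsto (fun T => (∫ t in N'..(N'+T), (ψ t) ^ 2) / T) atTop (nhds c) := by
      have hsq : ∀ t : ℝ, (ψ t) ^ 2 = ∑ j, ∑ k,
          (a j * Real.cos (δ j * t) + b j * Real.sin (δ j * t))
          * (a k * Real.cos (δ k * t) + b k * Real.sin (δ k * t)) := by
        intro t
        rw [hψ t, sq, Finset.sum_mul_sum]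
      have key3 : ∀ B : ℝ, (∫ t in N'..B, (ψ t) ^ 2) = ∑ j, ∑ k, ∫ t in N'..B,
          (a j * Real.cos (δ j * t) + b j * Real.sin (δ j * t))
          * (a k * Real.cos (δ k * t) + b k * Real.sin (δ k * t)) := by
        intro B
        rw [intervalIntegral.integral_congr (g := fun t => ∑ j, ∑ k,
          (a j * Real.cos (δ j * t) + b j * Real.sin (δ j * t))
          * (a k * Real.cos (δ k * t) + b k * Real.sin (δ k * t))) (fun t _ => hsq t)]
        rw [intervalIntegral.integral_finset_sum
          (fun j _ => Continuous.intervalIntegrable (by fun_prop) _ _)]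
        exact Finset.sum_congr rfl fun j _ => intervalIntegral.integral_finset_sum
          (fun k _ => Continuous.intervalIntegrable (by fun_prop) _ _)
      simp only [key3, Finset.sum_div]
      have H := tendsto_finset_sum Finset.univ (fun (j : Fin m) (_ : j ∈ Finset.univ) =>
        tendsto_finset_sum Finset.univ (fun (k : Fin m) (_ : k ∈ Finset.univ) =>
          aux_mean_pair (δ j) (δ k) (a j) (b j) (a k) (b k) N'))
      have hval : (∑ j, ∑ k : Fin m,
          ((a j * a k + b j * b k)/2 * (if δ j - δ k = 0 then 1 else 0)
        + ((a j * a k - b j * b k)/2 * (if δ j + δ k = 0 then 1 else 0)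
        + ((a j * b k + b j * a k)/2 * 0 + (b j * a k - a j * b k)/2 * 0)))) = c := by
        refine Finset.sum_congr rfl fun j _ => ?_
        calc (∑ k : Fin m,
            ((a j * a k + b j * b k)/2 * (if δ j - δ k = 0 then 1 else 0)
          + ((a j * a k - b j * b k)/2 * (if δ j + δ k = 0 then 1 else 0)
          + ((a j * b k + b j * a k)/2 * 0 + (b j * a k - a j * b k)/2 * 0))))
            = ∑ k : Fin m, (if j = k then (a j * a k + b j * b k)/2 else 0) := by
              refine Finset.sum_congr rfl fun k _ => ?_
              rw [if_neg (add_pos (hδpos j) (hδpos k)).ne']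
              by_cases hjk : j = k
              · subst hjk; simp
              · rw [if_neg (sub_ne_zero.2 fun hδ => hjk (hδinj hδ)), if_neg hjk]; ring
          _ = (a j ^ 2 + b j ^ 2) / 2 := by simp [sq]
      rwa [hval] at H
    -- eventual comparison
    have hcomp : ∀ᶠ T in (atTop : Filter ℝ),
        (∫ t in N'..(N'+T), (ψ t) ^ 2) / T ≤ M * ((∫ t in N'..(N'+T), -ψ t) / T) := by
      filter_upwards [eventually_gt_atTop 0] with T hT
      rw [← mul_div_assoc, ← intervalIntegral.integral_const_mul]
      gcongr
      apply intervalIntegral.integral_mono_on (by linarith)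
        (Continuous.intervalIntegrable (by fun_prop) _ _)
        (Continuous.intervalIntegrable (by fun_prop) _ _)
      intro t ht
      have h1 := hneg t ht.1
      have h2 := abs_le.1 (hM t)
      nlinarith
    have hrhs : Tendsto (fun T => M * ((∫ t in N'..(N'+T), -ψ t) / T)) atTop (nhds (M * 0)) := by
      have hneg' : ∀ B : ℝ, (∫ t in N'..B, -ψ t) = -(∫ t in N'..B, ψ t) :=
        fun B => intervalIntegral.integral_neg
      simp only [hneg', neg_div]
      simpa only [neg_zero] using (hmean.neg).const_mul M
    have hle := le_of_tendsto_of_tendsto hmean2 hrhs hcomp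
    rw [mul_zero] at hle
    linarith
  choose f hf1 hf2 using fun n : ℕ => key n
  exact ⟨f, tendsto_atTop_mono (fun n => (hf1 n).le)
    tendsto_natCast_atTop_atTop, hf2⟩
end

section
/- Let A be a self-adjoint operator on a Hilbert space H with complete orthonormal eigenbasis {φ_j} and negative eigenvalues λ_j → −∞, generating the semigroup S(t), and let b ∈ H. If U = ℝ, Ω = ℝ⁺ = {α ≥ 0}, and B : ℝ → H is Bu = ub, then there exists a nonzero g ∈ H with ⟨S(t)b, g⟩ ≤ 0 for all t ≥ 0; in particular one may take g = −φ_{j₀} or g = φ_{j₀} for an index j₀ with ⟨b, φ_{j₀}⟩ ≠ 0 (choosing the sign so that ⟨b, g⟩ ≤ 0), or any nonzero g orthogonal to all φ_j appearing in b if b has a zero coefficient. -/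
open Filter

theorem exists_ne_zero_forall_inner_nonpos_of_inner_eq_nonneg_mul
    {ι H : Type*} [NormedAddCommGroup H] [InnerProductSpace ℝ H]
    {e : H} (he : e ≠ 0) (v : ι → H) (x : H) (r : ι → ℝ) (hr : ∀ i, 0 ≤ r i)
    (hv : ∀ i, (inner ℝ (v i) e : ℝ) = r i * inner ℝ x e) :
    ∃ g : H, g ≠ 0 ∧ ∀ i, (inner ℝ (v i) g : ℝ) ≤ 0 := by
  by_cases hx : (inner ℝ x e : ℝ) ≤ 0
  · exact ⟨e, he, fun i => (hv i).symm ▸ mul_nonpos_of_nonneg_of_nonpos (hr i) hx⟩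
  · refine ⟨-e, neg_ne_zero.mpr he, fun i => ?_⟩
    rw [inner_neg_right, hv i, neg_nonpos]
    exact mul_nonneg (hr i) (not_le.mp hx).le

theorem stmt_12_general {H : Type*} [NormedAddCommGroup H] [InnerProductSpace ℝ H]
    (φ : ℕ → H) (hortho : Orthonormal ℝ φ)
    (l : ℕ → ℝ)
    (S : ℝ → H →L[ℝ] H)
    (hS : ∀ t : ℝ, 0 ≤ t → ∀ x : H, ∀ j,
      (inner ℝ (S t x) (φ j) : ℝ) = Real.exp (l j * t) * inner ℝ x (φ j))
    (b : H) :
    ∃ g : H, g ≠ 0 ∧ ∀ t : ℝ, 0 ≤ t → (inner ℝ (S t b) g : ℝ) ≤ 0 := by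
  obtain ⟨g, hg, hg_nonpos⟩ :=
    exists_ne_zero_forall_inner_nonpos_of_inner_eq_nonneg_mul (hortho.ne_zero 0)
      (fun t : Set.Ici (0 : ℝ) => S t b) b (fun t => Real.exp (l 0 * t))
      (fun _ => (Real.exp_pos _).le) (fun t => hS t t.2 b 0)
  exact ⟨g, hg, fun t ht => hg_nonpos ⟨t, ht⟩⟩

/-- Obstruction to constrained controllability (Corollary 2): for a self-adjoint
generator with complete orthonormal eigenbasis `φ j`, negative eigenvalues `l j → -∞`,
semigroup acting by `⟪S t x, φ j⟫ = e^{l j t} ⟪x, φ j⟫`, and the rank-one control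
operator `B u = u • b` with scalar controls `u ≥ 0`, there is a nonzero `g ∈ H` with
`⟪S t b, g⟫ ≤ 0` for all `t ≥ 0`. -/
theorem stmt_12 {H : Type*} [NormedAddCommGroup H] [InnerProductSpace ℝ H] [CompleteSpace H]
    (φ : ℕ → H) (hortho : Orthonormal ℝ φ)
    (hcomplete : ∀ x : H, (∀ j, (inner ℝ x (φ j) : ℝ) = 0) → x = 0)
    (l : ℕ → ℝ) (hlneg : ∀ j, l j < 0) (hlim : Tendsto l atTop atBot)
    (S : ℝ → H →L[ℝ] H)
    (hS : ∀ t : ℝ, 0 ≤ t → ∀ x : H, ∀ j,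
      (inner ℝ (S t x) (φ j) : ℝ) = Real.exp (l j * t) * inner ℝ x (φ j))
    (b : H) :
    ∃ g : H, g ≠ 0 ∧ ∀ t : ℝ, 0 ≤ t → (inner ℝ (S t b) g : ℝ) ≤ 0 :=
  stmt_12_general φ hortho l S hS b
end
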